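/- arXiv:0809.0277 — 2 statements merged into one kernel-verified Lean document; each statement's English description precedes it below -/
import Mathlib

section
/- Let s ≥ 1 and let (R_1,I_1),…,(R_s,I_s) be rings with unit, where each I_i is a Jacobson ideal of R_i. Let φ_i : R_i → R_{i+1} (for 1 ≤ i ≤ s−1) be a sequence of adequate ring homomorphisms with φ_i(I_i) ⊆ I_{i+1}; set φ_{ii} = id_{R_i} and φ_{ij} = φ_{j−1} ∘ ⋯ ∘ φ_i for i < j. For each i, let N_i and M_i be R_i-modules, all finitely generated with the possible exception of N_s. For each pair i ≤ j, let α_{ij} : N_i → M_j be a homomorphism over φ_{ij}. Let N = ⊕_{i=1}^s N_i and M = ⊕_{i=1}^s M_i as abelian groups, and define α : N → M by α(ξ_1,…,ξ_s) = (α_{11}(ξ_1), α_{12}(ξ_1)+α_{22}(ξ_2), …, α_{1s}(ξ_1)+⋯+α_{ss}(ξ_s)). If α(N) + Σ_{i=1}^s I_i·M_i = M, then α(N) = M, and moreover α(Σ_{i=1}^s I_i·N_i) = Σ_{i=1}^s I_i·M_i. -/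
open Submodule

/-- An ideal `I` of a ring `R` with unit is a *Jacobson ideal* if `1 + z` is invertible
for every `z ∈ I`. -/
def IsJacobsonIdeal {R : Type} [CommRing R] (I : Ideal R) : Prop :=
  ∀ z ∈ I, IsUnit (1 + z)

/-- A map `α : A → C` from an `R`-module to an `S`-module is a *homomorphism over* a ring
homomorphism `φ : R →+* S` if it is additive and `α (r • a) = φ r • α a`. -/
def IsHomOver {R S : Type} [CommRing R] [CommRing S] (φ : R →+* S)
    {A C : Type} [AddCommGroup A] [Module R A] [AddCommGroup C] [Module S C]
    (α : A → C) : Prop :=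
  (∀ a b : A, α (a + b) = α a + α b) ∧ ∀ (r : R) (a : A), α (r • a) = φ r • α a

/-- A ring homomorphism `φ : (R, I) → (S, J)` between rings with distinguished Jacobson
ideals, with `φ I ⊆ J`, is *adequate* if: for every finitely generated `R`-module `A`,
all `S`-modules `B` and `C` with `C` finitely generated, every `S`-linear `β : B → C`
and every homomorphism `α : A → C` over `φ`, the equality `α(A) + β(B) + J·C = C`
implies both `α(A) + β(B) = C` and `α(I·A) + β(J·B) = J·C`. -/
def Adequate {R S : Type} [CommRing R] [CommRing S] (φ : R →+* S)
    (I : Ideal R) (J : Ideal S) : Prop :=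
  ∀ (A : Type) (_ : AddCommGroup A), ∀ (_ : Module R A), Module.Finite R A →
  ∀ (B C : Type) (_ : AddCommGroup B), ∀ (_ : Module S B),
  ∀ (_ : AddCommGroup C), ∀ (_ : Module S C), Module.Finite S C →
  ∀ (β : B →ₗ[S] C) (α : A → C), IsHomOver φ α →
    (∀ c : C, ∃ (a : A) (b : B), c - α a - β b ∈ J • (⊤ : Submodule S C)) →
    (∀ c : C, ∃ (a : A) (b : B), c = α a + β b) ∧
    (∀ c : C, c ∈ J • (⊤ : Submodule S C) ↔
      ∃ a ∈ I • (⊤ : Submodule R A), ∃ b ∈ J • (⊤ : Submodule S B), c = α a + β b)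

/-- The total map `α : ⊕ᵢ Nᵢ → ⊕ᵢ Mᵢ`, `α (ξ₁, …, ξ_s) = (∑_{j ≤ i} α_{j i} (ξ_j))ᵢ`. -/
def totalHom {s : ℕ} {N M : Fin s → Type}
    [∀ i, AddCommGroup (N i)] [∀ i, AddCommGroup (M i)]
    (A : ∀ i j : Fin s, i ≤ j → N i → M j)
    (n : ∀ i, N i) : ∀ i, M i :=
  fun i => ∑ j : Fin s, if h : j ≤ i then A j i h (n j) else 0

/-!
Levels are numbered as in the statement; in the code the bottom level is `0`.

The heart of the matter is that `α` maps `Σ Iᵢ·Nᵢ` onto `Σ Iᵢ·Mᵢ`; surjectivity follows, since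
hypothesis (I) writes any `m` as `α n + m'` with `m' ∈ Σ Iᵢ·Mᵢ`.

It is proved by induction on `s`, peeling off the bottom level. Let `U ⊆ N₁` consist of those `ξ`
whose contributions `α₁ⱼ(ξ)`, `j > 1`, are cancelled by an element of `N₂ ⊕ ⋯ ⊕ N_s`; it is an
`R₁`-submodule. If the statement holds on the levels `> 1`, hypothesis (I) gives
`α₁₁(U) + I₁M₁ = M₁`, hence `α₁₁(U) = M₁` by Nakayama, and `α₁₁(I₁U) = I₁M₁` settles level `1`.

For the levels `> 1`, replace `N₁` by its base change `X = R₂ ⊗_{R₁} N₁`, a finitely generated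
`R₂`-module through which every `α₁ⱼ`, `j ≥ 2`, factors, and merge it into level `2`. The merged
system has `s - 1` levels and satisfies (I), so the induction hypothesis applies to it. To get back
from `X` to `N₁`, let `W` (resp. `W'`) consist of the elements of `X` whose images are realized by
`N₂ ⊕ ⋯ ⊕ N_s` (resp. by `Σ_{i ≥ 2} Iᵢ·Nᵢ`). Then `X = 1 ⊗ N₁ + W + I₂X`, and adequacy of `φ₁`,
applied to `N₁ → X/W' ← W`, gives `I₂X ⊆ 1 ⊗ I₁N₁ + W'`.
-/

section HomOver

variable {R S : Type} [CommRing R] [CommRing S] {φ : R →+* S}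
variable {A C : Type} [AddCommGroup A] [Module R A] [AddCommGroup C] [Module S C]

theorem IsHomOver.map_zero {α : A → C} (h : IsHomOver φ α) : α 0 = 0 :=
  (AddMonoidHom.mk' α h.1).map_zero

theorem IsHomOver.map_sub {α : A → C} (h : IsHomOver φ α) (a b : A) : α (a - b) = α a - α b :=
  (AddMonoidHom.mk' α h.1).map_sub a b

theorem IsHomOver.mem_smul_top {α : A → C} (h : IsHomOver φ α) {I : Ideal R} {J : Ideal S}
    (hIJ : ∀ r ∈ I, φ r ∈ J) {a : A} (ha : a ∈ I • (⊤ : Submodule R A)) :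
    α a ∈ J • (⊤ : Submodule S C) := by
  refine Submodule.smul_induction_on ha (fun r hr a _ => ?_) fun x y hx hy => ?_
  · rw [h.2]; exact Submodule.smul_mem_smul (hIJ r hr) mem_top
  · rw [h.1]; exact add_mem hx hy

theorem IsHomOver.linearMap_comp {D : Type} [AddCommGroup D] [Module S D] {α : A → C}
    (h : IsHomOver φ α) (f : C →ₗ[S] D) : IsHomOver φ (f ∘ α) :=
  ⟨fun a b => by simp [h.1], fun r a => by simp [h.2]⟩

def IsHomOver.toLinearMap {B : Type} [AddCommGroup B] [Module R B] {α : A → B}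
    (h : IsHomOver (RingHom.id R) α) : A →ₗ[R] B where
  toFun := α
  map_add' := h.1
  map_smul' := h.2

end HomOver

theorem IsJacobsonIdeal.le_jacobson_bot {R : Type} [CommRing R] {I : Ideal R}
    (h : IsJacobsonIdeal I) : I ≤ Ideal.jacobson ⊥ := by
  intro z hz
  rw [Ideal.mem_jacobson_bot]
  intro y
  simpa [add_comm] using h _ (I.mul_mem_right y hz)

theorem IsJacobsonIdeal.eq_top_of_le_sup_smul {R M : Type} [CommRing R] [AddCommGroup M]
    [Module R M] [Module.Finite R M] {I : Ideal R} (hI : IsJacobsonIdeal I) {p : Submodule R M}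
    (hp : ∀ m : M, ∃ u ∈ p, m - u ∈ I • (⊤ : Submodule R M)) : p = ⊤ := by
  refine top_le_iff.mp (Submodule.le_of_le_smul_of_le_jacobson_bot Module.Finite.fg_top
    hI.le_jacobson_bot fun m _ => ?_)
  obtain ⟨u, hu, hmu⟩ := hp m
  simpa using Submodule.add_mem_sup hu hmu

section BaseChange

open TensorProduct

variable {R S T : Type} [CommRing R] [CommRing S] [CommRing T] [Algebra R S]
variable {A C : Type} [AddCommGroup A] [Module R A] [AddCommGroup C] [Module T C]

theorem isHomOver_one_tmul : IsHomOver (algebraMap R S) (fun a : A => (1 : S) ⊗ₜ[R] a) :=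
  ⟨fun a b => tmul_add _ a b, fun r a => by
    simp only [tmul_smul, algebraMap_smul]⟩

theorem IsHomOver.exists_lift_tensorProduct {ψ : S →+* T} {α : A → C}
    (h : IsHomOver (ψ.comp (algebraMap R S)) α) :
    ∃ ε : S ⊗[R] A → C, IsHomOver ψ ε ∧ ∀ a, ε (1 ⊗ₜ a) = α a := by
  let F : S →+ A →+ C := AddMonoidHom.mk' (fun r => AddMonoidHom.mk' (fun a => ψ r • α a)
    fun a b => by rw [h.1, smul_add]) fun r r' => by ext a; simp [add_smul]
  have hF : ∀ (r : R) (x : S) (a : A), F (r • x) a = F x (r • a) := by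
    intro r x a
    simp [F, h.2, Algebra.smul_def, smul_smul, mul_comm]
  refine ⟨liftAddHom F hF, ⟨map_add _, fun r x => ?_⟩, fun a => by simp [F]⟩
  induction x using TensorProduct.induction_on with
  | zero => simp
  | tmul x a => simp [F, smul_tmul', smul_smul]
  | add x y hx hy => rw [smul_add, map_add, hx, hy, map_add, smul_add]

end BaseChange

theorem Fin.le_induction_succ {s : ℕ} {i : Fin s} {P : ∀ j : Fin s, i ≤ j → Prop}
    (base : P i le_rfl)
    (step : ∀ (j : Fin s) (hij : i ≤ j) (hj : (j : ℕ) + 1 < s),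
      P j hij → P ⟨(j : ℕ) + 1, hj⟩ (le_trans hij (Fin.le_def.mpr (Nat.le_succ _)))) :
    ∀ j h, P j h := by
  suffices ∀ n, (i : ℕ) ≤ n → ∀ (hn : n < s) (h : i ≤ ⟨n, hn⟩), P ⟨n, hn⟩ h from
    fun j h => this j (Fin.le_def.mp h) j.isLt h
  intro n hin
  induction n, hin using Nat.le_induction with
  | base => exact fun _ _ => base
  | succ n hin ih => exact fun hn _ => step ⟨n, by omega⟩ hin hn (ih (by omega) hin)

section Chain

variable {s : ℕ} {R : Fin s → Type} [∀ i, CommRing (R i)]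
variable {Φ : ∀ i j : Fin s, i ≤ j → (R i →+* R j)}
variable (hΦrefl : ∀ (i : Fin s) (h : i ≤ i), Φ i i h = RingHom.id (R i))
variable (hΦsucc : ∀ (i j : Fin s) (hij : i ≤ j) (hj : (j : ℕ) + 1 < s),
      Φ i ⟨(j : ℕ) + 1, hj⟩ (le_trans hij (Fin.le_def.mpr (Nat.le_succ _))) =
        (Φ j ⟨(j : ℕ) + 1, hj⟩ (Fin.le_def.mpr (Nat.le_succ _))).comp (Φ i j hij))
include hΦrefl hΦsucc

theorem chain_comp (i j k : Fin s) (hij : i ≤ j) (hjk : j ≤ k) (hik : i ≤ k) :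
    Φ i k hik = (Φ j k hjk).comp (Φ i j hij) := by
  induction k, hjk using Fin.le_induction_succ with
  | base => rw [hΦrefl, RingHom.id_comp]
  | step k hjk hk ih =>
    rw [hΦsucc i k (hij.trans hjk) hk, hΦsucc j k hjk hk, ih, RingHom.comp_assoc]

theorem chain_mem {I : ∀ i, Ideal (R i)}
    (hΦI : ∀ (j : Fin s) (hj : (j : ℕ) + 1 < s),
      ∀ r ∈ I j, Φ j ⟨(j : ℕ) + 1, hj⟩ (Fin.le_def.mpr (Nat.le_succ _)) r ∈ I ⟨(j : ℕ) + 1, hj⟩)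
    (i j : Fin s) (hij : i ≤ j) (r : R i) (hr : r ∈ I i) : Φ i j hij r ∈ I j := by
  induction j, hij using Fin.le_induction_succ with
  | base => rwa [hΦrefl]
  | step j hij hj ih => rw [hΦsucc i j hij hj, RingHom.comp_apply]; exact hΦI j hj _ ih

end Chain

def Fin.succRestrict {t : ℕ} {γ : Fin (t + 1) → Fin (t + 1) → Type*}
    (F : ∀ i j, i ≤ j → γ i j) (i j : Fin t) (h : i ≤ j) : γ i.succ j.succ :=
  F i.succ j.succ (Fin.succ_le_succ_iff.mpr h)

section TotalHom

variable {t : ℕ} {N M : Fin t → Type} [∀ i, AddCommGroup (N i)] [∀ i, AddCommGroup (M i)]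
variable {A : ∀ i j : Fin t, i ≤ j → N i → M j}

theorem totalHom_add (hA : ∀ i j h (a b : N i), A i j h (a + b) = A i j h a + A i j h b)
    (n n' : ∀ i, N i) : totalHom A (n + n') = totalHom A n + totalHom A n' := by
  ext l
  simp only [totalHom, Pi.add_apply, ← Finset.sum_add_distrib]
  refine Finset.sum_congr rfl fun j _ => ?_
  split_ifs <;> simp [hA]

def totalAddHom (hA : ∀ i j h (a b : N i), A i j h (a + b) = A i j h a + A i j h b) :
    (∀ i, N i) →+ ∀ i, M i :=
  AddMonoidHom.mk' (totalHom A) (totalHom_add hA)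

variable {R : Fin t → Type} [∀ i, CommRing (R i)]
variable [∀ i, Module (R i) (N i)] [∀ i, Module (R i) (M i)]
variable {Φ : ∀ i j : Fin t, i ≤ j → (R i →+* R j)}
variable (hA : ∀ i j (h : i ≤ j), IsHomOver (Φ i j h) (A i j h))
include hA

theorem totalHom_zero : totalHom A (0 : ∀ i, N i) = 0 :=
  map_zero (totalAddHom fun i j h => (hA i j h).1)

theorem totalHom_sub (n n' : ∀ i, N i) : totalHom A (n - n') = totalHom A n - totalHom A n' :=
  map_sub (totalAddHom fun i j h => (hA i j h).1) n n'

theorem totalHom_neg (n : ∀ i, N i) : totalHom A (-n) = -totalHom A n :=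
  map_neg (totalAddHom fun i j h => (hA i j h).1) n

theorem totalHom_smul_of_comp {S : Type} [CommRing S] {ψ : ∀ i, S →+* R i}
    (hψ : ∀ i j (h : i ≤ j), ψ j = (Φ i j h).comp (ψ i)) (c : S) (n : ∀ i, N i) :
    totalHom A (fun i => ψ i c • n i) = fun l => ψ l c • totalHom A n l := by
  ext l
  simp only [totalHom, Finset.smul_sum]
  refine Finset.sum_congr rfl fun j _ => ?_
  split_ifs with h
  · rw [(hA j l h).2, hψ j l h, RingHom.comp_apply]
  · rw [smul_zero]

theorem totalHom_mem_smul_top {I : ∀ i, Ideal (R i)}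
    (hΦI : ∀ i j (h : i ≤ j), ∀ r ∈ I i, Φ i j h r ∈ I j) {n : ∀ i, N i}
    (hn : ∀ i, n i ∈ I i • (⊤ : Submodule (R i) (N i))) (l : Fin t) :
    totalHom A n l ∈ I l • (⊤ : Submodule (R l) (M l)) := by
  refine Submodule.sum_mem _ fun j _ => ?_
  split_ifs with h
  · exact (hA j l h).mem_smul_top (hΦI j l h) (hn j)
  · exact zero_mem _

end TotalHom

section TotalHomSucc

variable {t : ℕ} {N M : Fin (t + 1) → Type} [∀ i, AddCommGroup (N i)] [∀ i, AddCommGroup (M i)]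
variable (A : ∀ i j : Fin (t + 1), i ≤ j → N i → M j) (n : ∀ i, N i)

theorem totalHom_apply_zero : totalHom A n 0 = A 0 0 le_rfl (n 0) := by
  rw [totalHom, Fin.sum_univ_succ, dif_pos le_rfl, Finset.sum_eq_zero, add_zero]
  intro j _
  rw [dif_neg (Fin.succ_pos j).not_ge]

theorem totalHom_apply_succ (l : Fin t) :
    totalHom A n l.succ =
      A 0 l.succ (Fin.zero_le _) (n 0) + totalHom (Fin.succRestrict A) (Fin.tail n) l := by
  rw [totalHom, Fin.sum_univ_succ, dif_pos (Fin.zero_le _)]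
  congr 1
  refine Finset.sum_congr rfl fun j _ => ?_
  simp only [Fin.succRestrict, Fin.tail, Fin.succ_le_succ_iff]

end TotalHomSucc

section Realizable

variable {t : ℕ} {R : Fin t → Type} [∀ i, CommRing (R i)]
variable {N M : Fin t → Type} [∀ i, AddCommGroup (N i)] [∀ i, Module (R i) (N i)]
variable [∀ i, AddCommGroup (M i)] [∀ i, Module (R i) (M i)]
variable {Φ : ∀ i j : Fin t, i ≤ j → (R i →+* R j)} {A : ∀ i j : Fin t, i ≤ j → N i → M j}
variable (hA : ∀ i j (h : i ≤ j), IsHomOver (Φ i j h) (A i j h))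
variable {S P : Type} [CommRing S] [AddCommGroup P] [Module S P] {ψ : ∀ i, S →+* R i}
variable (hψ : ∀ i j (h : i ≤ j), ψ j = (Φ i j h).comp (ψ i))
variable {f : ∀ i, P → M i} (hf : ∀ i, IsHomOver (ψ i) (f i))
include hA hψ hf

theorem totalHom_smul_eq_of_eq {v : ∀ i, N i} {x : P} (hv : totalHom A v = fun i => f i x)
    (c : S) : totalHom A (fun i => ψ i c • v i) = fun i => f i (c • x) := by
  rw [totalHom_smul_of_comp hA hψ, hv]
  ext i
  exact ((hf i).2 c x).symm

def realizable (J : ∀ i, Submodule (R i) (N i)) : Submodule S P where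
  carrier := {x | ∃ v : ∀ i, N i, (∀ i, v i ∈ J i) ∧ totalHom A v = fun i => f i x}
  add_mem' := by
    rintro x y ⟨v, hvJ, hv⟩ ⟨w, hwJ, hw⟩
    refine ⟨v + w, fun i => add_mem (hvJ i) (hwJ i), ?_⟩
    rw [totalHom_add (fun i j h => (hA i j h).1), hv, hw]
    ext i
    exact ((hf i).1 x y).symm
  zero_mem' := ⟨0, fun i => zero_mem _, by
    rw [totalHom_zero hA]
    ext i
    exact ((hf i).map_zero).symm⟩
  smul_mem' c x := fun ⟨v, hvJ, hv⟩ => ⟨fun i => ψ i c • v i, fun i => (J i).smul_mem _ (hvJ i),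
    totalHom_smul_eq_of_eq hA hψ hf hv c⟩

theorem smul_realizable_le {I : ∀ i, Ideal (R i)} {K : Ideal S}
    (hK : ∀ i, ∀ c ∈ K, ψ i c ∈ I i) :
    K • realizable hA hψ hf (fun _ => ⊤) ≤
      realizable hA hψ hf (fun i => I i • (⊤ : Submodule (R i) (N i))) := by
  refine Submodule.smul_le.mpr fun c hc x ⟨v, _, hv⟩ => ?_
  exact ⟨fun i => ψ i c • v i, fun i => Submodule.smul_mem_smul (hK i c hc) mem_top,
    totalHom_smul_eq_of_eq hA hψ hf hv c⟩

end Realizable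

def MatherProperty (s : ℕ) : Prop :=
  ∀ (R : Fin s → Type) (_ : ∀ i, CommRing (R i)) (I : ∀ i, Ideal (R i)),
    (∀ i, IsJacobsonIdeal (I i)) →
  ∀ Φ : ∀ i j : Fin s, i ≤ j → (R i →+* R j),
    (∀ i (h : i ≤ i), Φ i i h = RingHom.id (R i)) →
    (∀ i j k (hij : i ≤ j) (hjk : j ≤ k) (hik : i ≤ k),
      Φ i k hik = (Φ j k hjk).comp (Φ i j hij)) →
    (∀ i j (h : i ≤ j), ∀ r ∈ I i, Φ i j h r ∈ I j) →
    (∀ (i j : Fin s) (h : i ≤ j), (j : ℕ) = i + 1 → Adequate (Φ i j h) (I i) (I j)) →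
  ∀ (N M : Fin s → Type) (_ : ∀ i, AddCommGroup (N i)) (_ : ∀ i, Module (R i) (N i))
    (_ : ∀ i, AddCommGroup (M i)) (_ : ∀ i, Module (R i) (M i)),
    (∀ i, Module.Finite (R i) (M i)) →
    (∀ i : Fin s, (i : ℕ) + 1 < s → Module.Finite (R i) (N i)) →
  ∀ A : ∀ i j : Fin s, i ≤ j → N i → M j, (∀ i j (h : i ≤ j), IsHomOver (Φ i j h) (A i j h)) →
    (∀ m : ∀ i, M i, ∃ n : ∀ i, N i,
      ∀ i, m i - totalHom A n i ∈ I i • (⊤ : Submodule (R i) (M i))) →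
  ∀ m : ∀ i, M i, (∀ i, m i ∈ I i • (⊤ : Submodule (R i) (M i))) →
    ∃ n : ∀ i, N i, (∀ i, n i ∈ I i • (⊤ : Submodule (R i) (N i))) ∧ totalHom A n = m

section LevelZero

variable {t : ℕ} {R : Fin (t + 1) → Type} [∀ i, CommRing (R i)]
variable {N M : Fin (t + 1) → Type} [∀ i, AddCommGroup (N i)] [∀ i, Module (R i) (N i)]
variable [∀ i, AddCommGroup (M i)] [∀ i, Module (R i) (M i)]
variable {Φ : ∀ i j : Fin (t + 1), i ≤ j → (R i →+* R j)}
variable {A : ∀ i j : Fin (t + 1), i ≤ j → N i → M j}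
variable (hA : ∀ i j (h : i ≤ j), IsHomOver (Φ i j h) (A i j h))
include hA

theorem isHomOver_succRestrict (i j : Fin t) (h : i ≤ j) :
    IsHomOver (Fin.succRestrict Φ i j h) (Fin.succRestrict A i j h) :=
  hA _ _ _

theorem totalHom_apply_succ_eq_zero_iff (w : ∀ i, N i) :
    (∀ l : Fin t, totalHom A w l.succ = 0) ↔
      totalHom (Fin.succRestrict A) (-Fin.tail w) =
        fun l : Fin t => A 0 l.succ (Fin.zero_le _) (w 0) := by
  rw [totalHom_neg (isHomOver_succRestrict hA), funext_iff]
  refine forall_congr' fun l => ?_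
  rw [totalHom_apply_succ, Pi.neg_apply, neg_eq_iff_add_eq_zero, add_comm]

variable {I : ∀ i, Ideal (R i)} (hΦI : ∀ i j (h : i ≤ j), ∀ r ∈ I i, Φ i j h r ∈ I j)
  (hyp : ∀ m : ∀ i, M i, ∃ n : ∀ i, N i,
    ∀ i, m i - totalHom A n i ∈ I i • (⊤ : Submodule (R i) (M i)))
  (hsucc : ∀ m : ∀ l : Fin t, M l.succ,
    (∀ l, m l ∈ I l.succ • (⊤ : Submodule (R l.succ) (M l.succ))) →
    ∃ n : ∀ i, N i, (∀ i, n i ∈ I i • (⊤ : Submodule (R i) (N i))) ∧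
      ∀ l, totalHom A n l.succ = m l)
include hΦI hyp hsucc

theorem exists_totalHom_succ_eq_zero_sub_mem (m₀ : M 0) :
    ∃ w : ∀ i, N i, (∀ l : Fin t, totalHom A w l.succ = 0) ∧
      m₀ - A 0 0 le_rfl (w 0) ∈ I 0 • (⊤ : Submodule (R 0) (M 0)) := by
  obtain ⟨n, hn⟩ := hyp (Fin.cons m₀ 0)
  obtain ⟨n', hn'I, hn'⟩ := hsucc (fun l => totalHom A n l.succ) fun l => by simpa using hn l.succ
  refine ⟨n - n', fun l => by rw [totalHom_sub hA, Pi.sub_apply, hn', sub_self], ?_⟩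
  have : m₀ - A 0 0 le_rfl ((n - n') 0) = (m₀ - totalHom A n 0) + totalHom A n' 0 := by
    rw [Pi.sub_apply, (hA 0 0 le_rfl).map_sub, totalHom_apply_zero, totalHom_apply_zero]
    abel
  rw [this]
  exact add_mem (by simpa using hn 0) (totalHom_mem_smul_top hA hΦI hn'I 0)

theorem exists_preimage_of_exists_preimage_succ (hJac : IsJacobsonIdeal (I 0))
    (hrefl : Φ 0 0 le_rfl = RingHom.id (R 0))
    (hcomp : ∀ i j k (hij : i ≤ j) (hjk : j ≤ k) (hik : i ≤ k),
      Φ i k hik = (Φ j k hjk).comp (Φ i j hij))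
    [Module.Finite (R 0) (M 0)] (m : ∀ i, M i)
    (hm : ∀ i, m i ∈ I i • (⊤ : Submodule (R i) (M i))) :
    ∃ n : ∀ i, N i, (∀ i, n i ∈ I i • (⊤ : Submodule (R i) (N i))) ∧ totalHom A n = m := by
  let α₀ : N 0 →ₗ[R 0] M 0 :=
    (hrefl ▸ hA 0 0 le_rfl : IsHomOver (RingHom.id (R 0)) (A 0 0 le_rfl)).toLinearMap
  have hα₀ : ∀ x, α₀ x = A 0 0 le_rfl x := fun _ => rfl
  have hψ : ∀ i j (h : i ≤ j), Φ 0 j.succ (Fin.zero_le _) =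
      (Fin.succRestrict Φ i j h).comp (Φ 0 i.succ (Fin.zero_le _)) :=
    fun _ _ _ => hcomp _ _ _ _ _ _
  have hf : ∀ l : Fin t, IsHomOver (Φ 0 l.succ (Fin.zero_le _)) (A 0 l.succ (Fin.zero_le _)) :=
    fun _ => hA _ _ _
  set U := realizable (isHomOver_succRestrict hA) hψ hf (fun _ => ⊤)
  have hU : U.map α₀ = ⊤ := hJac.eq_top_of_le_sup_smul fun m₀ => by
    obtain ⟨w, hw, hmw⟩ := exists_totalHom_succ_eq_zero_sub_mem hA hΦI hyp hsucc m₀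
    exact ⟨α₀ (w 0), mem_map_of_mem
      ⟨_, fun _ => trivial, (totalHom_apply_succ_eq_zero_iff hA w).mp hw⟩, hmw⟩
  obtain ⟨n₁, hn₁I, hn₁⟩ := hsucc (fun l => m l.succ) fun l => hm l.succ
  have h₀ : m 0 - totalHom A n₁ 0 ∈ (I 0 • U).map α₀ := by
    rw [map_smul'', hU]
    exact sub_mem (hm 0) (totalHom_mem_smul_top hA hΦI hn₁I 0)
  obtain ⟨u, hu, hαu⟩ := h₀
  obtain ⟨v, hvI, hv⟩ := smul_realizable_le (isHomOver_succRestrict hA) hψ hf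
    (fun l c hc => hΦI _ _ _ c hc) hu
  have hw : ∀ l : Fin t, totalHom A (Fin.cons u (-v)) l.succ = 0 :=
    (totalHom_apply_succ_eq_zero_iff hA _).mpr (by simpa [Fin.tail_cons] using hv)
  refine ⟨n₁ + Fin.cons u (-v), fun i => add_mem (hn₁I i) ?_, ?_⟩
  · refine Fin.cases ?_ (fun l => ?_) i
    · exact Submodule.smul_mono le_rfl le_top hu
    · simpa using neg_mem (hvI l)
  · rw [totalHom_add fun i j h => (hA i j h).1]
    ext i
    refine Fin.cases ?_ (fun l => ?_) i
    · rw [Pi.add_apply, totalHom_apply_zero A (Fin.cons u (-v)), Fin.cons_zero, ← hα₀, hαu]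
      abel
    · rw [Pi.add_apply, hn₁, hw, add_zero]

end LevelZero

theorem Adequate.exists_sub_mem {R S : Type} [CommRing R] [CommRing S] {φ : R →+* S}
    {I : Ideal R} {J : Ideal S} (hφ : Adequate φ I J) {A X : Type} [AddCommGroup A]
    [Module R A] [Module.Finite R A] [AddCommGroup X] [Module S X] [Module.Finite S X]
    {j : A → X} (hj : IsHomOver φ j) {W W' : Submodule S X} (hJW : J • W ≤ W')
    (hdense : ∀ x, ∃ a, ∃ w ∈ W, x - j a - w ∈ J • (⊤ : Submodule S X))
    {y : X} (hy : y ∈ J • (⊤ : Submodule S X)) :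
    ∃ a ∈ I • (⊤ : Submodule R A), y - j a ∈ W' := by
  have hφA := hφ A _ _ inferInstance W (X ⧸ W') _ _ _ _ inferInstance (W'.mkQ ∘ₗ W.subtype)
    (W'.mkQ ∘ j) (hj.linearMap_comp W'.mkQ) fun c => by
      obtain ⟨x, rfl⟩ := W'.mkQ_surjective c
      obtain ⟨a, w, hw, hx⟩ := hdense x
      exact ⟨a, ⟨w, hw⟩, by simpa [← map_sub] using smul_top_le_comap_smul_top _ W'.mkQ hx⟩
  obtain ⟨a, ha, b, hb, hab⟩ := (hφA.2 (W'.mkQ y)).mp (smul_top_le_comap_smul_top _ _ hy)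
  refine ⟨a, ha, ?_⟩
  have hbW' : (b : X) ∈ W' := hJW ((mem_smul_top_iff _ W b).mp hb)
  have hyab : y - j a - b ∈ W' := by
    rw [← Submodule.Quotient.mk_eq_zero, Submodule.Quotient.mk_sub, Submodule.Quotient.mk_sub]
    simp only [LinearMap.coe_comp, Function.comp_apply, mkQ_apply, subtype_apply] at hab
    rw [hab]
    abel
  simpa using add_mem hyab hbW'

section Merged

variable {t : ℕ} {N : Fin (t + 2) → Type} {X : Type}

variable (N X) in
def merged : Fin (t + 1) → Type :=
  Fin.cons (α := fun _ => Type) (N (Fin.succ 0) × X) fun j => N j.succ.succ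

def merged.fst (n : ∀ k, merged N X k) (i : Fin (t + 1)) : N i.succ :=
  Fin.cons (α := fun i => N i.succ) (n 0).1 (fun j => n j.succ) i

def merged.mk (n : ∀ i : Fin (t + 1), N i.succ) (x : X) : ∀ k, merged N X k :=
  Fin.cons (α := merged N X) (n 0, x) fun j => n j.succ

theorem merged.fst_mk (n : ∀ i : Fin (t + 1), N i.succ) (x : X) :
    merged.fst (merged.mk n x) = n := by
  ext i
  refine Fin.cases ?_ (fun j => ?_) i <;> rfl

variable {R : Fin (t + 2) → Type} [∀ i, CommRing (R i)]
variable [∀ i, AddCommGroup (N i)] [∀ i, Module (R i) (N i)]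
variable [AddCommGroup X] [Module (R (Fin.succ 0)) X]

instance merged.instAddCommGroup (k : Fin (t + 1)) : AddCommGroup (merged N X k) :=
  Fin.cases (motive := fun k => AddCommGroup (merged N X k))
    (inferInstanceAs (AddCommGroup (N (Fin.succ 0) × X)))
    (fun j => inferInstanceAs (AddCommGroup (N j.succ.succ))) k

instance merged.instModule (k : Fin (t + 1)) : Module (R k.succ) (merged N X k) :=
  Fin.cases (motive := fun k => Module (R k.succ) (merged N X k))
    (inferInstanceAs (Module (R (Fin.succ 0)) (N (Fin.succ 0) × X)))
    (fun j => inferInstanceAs (Module (R j.succ.succ) (N j.succ.succ))) k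

theorem merged.finite (hN : ∀ i : Fin (t + 2), (i : ℕ) + 1 < t + 2 → Module.Finite (R i) (N i))
    [Module.Finite (R (Fin.succ 0)) X] (k : Fin (t + 1)) (hk : (k : ℕ) + 1 < t + 1) :
    Module.Finite (R k.succ) (merged N X k) := by
  induction k using Fin.cases with
  | zero =>
    have := hN (Fin.succ 0) (by simpa using hk)
    exact inferInstanceAs (Module.Finite (R (Fin.succ 0)) (N (Fin.succ 0) × X))
  | succ j => exact hN j.succ.succ (by simpa using hk)

section Mem

variable {I : ∀ i, Ideal (R i)} {n : ∀ k, merged N X k}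
  (hn : ∀ k, n k ∈ I k.succ • (⊤ : Submodule (R k.succ) (merged N X k)))
include hn

theorem merged.snd_mem_smul_top :
    (n 0).2 ∈ I (Fin.succ 0) • (⊤ : Submodule (R (Fin.succ 0)) X) :=
  smul_top_le_comap_smul_top _ (LinearMap.snd (R (Fin.succ 0)) (N (Fin.succ 0)) X) (hn 0)

theorem merged.fst_mem_smul_top (i : Fin (t + 1)) :
    merged.fst n i ∈ I i.succ • (⊤ : Submodule (R i.succ) (N i.succ)) := by
  induction i using Fin.cases with
  | zero =>
    exact smul_top_le_comap_smul_top _ (LinearMap.fst (R (Fin.succ 0)) (N (Fin.succ 0)) X) (hn 0)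
  | succ j => exact hn j.succ

end Mem

variable {M : Fin (t + 2) → Type} [∀ i, AddCommGroup (M i)] [∀ i, Module (R i) (M i)]
variable (A : ∀ i j : Fin (t + 2), i ≤ j → N i → M j) (ε : ∀ l : Fin (t + 1), X → M l.succ)

def mergedHom (i j : Fin (t + 1)) : i ≤ j → merged N X i → M j.succ :=
  Fin.cases (motive := fun i => i ≤ j → merged N X i → M j.succ)
    (fun _ p => A (Fin.succ 0) j.succ (Fin.succ_le_succ_iff.mpr (Fin.zero_le _)) p.1 + ε j p.2)
    (fun i h x => A i.succ.succ j.succ (Fin.succ_le_succ_iff.mpr h) x) i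

theorem totalHom_mergedHom (n : ∀ k, merged N X k) :
    totalHom (mergedHom A ε) n =
      totalHom (Fin.succRestrict A) (merged.fst n) + fun l => ε l (n 0).2 := by
  ext l
  simp only [totalHom, Pi.add_apply, Fin.sum_univ_succ, dif_pos (Fin.zero_le l)]
  simp only [mergedHom, Fin.cases_zero, Fin.cases_succ]
  rw [add_right_comm]
  rfl

theorem isHomOver_mergedHom {Φ : ∀ i j : Fin (t + 2), i ≤ j → (R i →+* R j)}
    (hA : ∀ i j (h : i ≤ j), IsHomOver (Φ i j h) (A i j h))
    (hε : ∀ l, IsHomOver (Fin.succRestrict Φ 0 l (Fin.zero_le l)) (ε l)) (i j : Fin (t + 1))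
    (h : i ≤ j) : IsHomOver (Fin.succRestrict Φ i j h) (mergedHom A ε i j h) := by
  induction i using Fin.cases with
  | zero =>
    refine ⟨fun p q => ?_, fun r p => ?_⟩
    · show A _ j.succ _ (p.1 + q.1) + ε j (p.2 + q.2) =
        (A _ j.succ _ p.1 + ε j p.2) + (A _ j.succ _ q.1 + ε j q.2)
      rw [(hA _ _ _).1, (hε j).1]
      abel
    · show A _ j.succ _ (r • p.1) + ε j (r • p.2) =
        Fin.succRestrict Φ 0 j h r • (A _ j.succ _ p.1 + ε j p.2)
      rw [(hA _ _ _).2, (hε j).2, smul_add]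
      rfl
  | succ i => exact hA i.succ.succ j.succ _

end Merged

section MergeLevels

variable {u : ℕ} {R : Fin (u + 2) → Type} [∀ i, CommRing (R i)] {I : ∀ i, Ideal (R i)}
variable {N M : Fin (u + 2) → Type} [∀ i, AddCommGroup (N i)]
variable [∀ i, AddCommGroup (M i)] [∀ i, Module (R i) (M i)]
variable {Φ : ∀ i j : Fin (u + 2), i ≤ j → (R i →+* R j)}
variable {A : ∀ i j : Fin (u + 2), i ≤ j → N i → M j}
variable {X : Type} [AddCommGroup X]
variable {ε : ∀ l : Fin (u + 1), X → M l.succ} {j : N 0 → X}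
variable (hεj : ∀ l a, ε l (j a) = A 0 l.succ (Fin.zero_le _) a)
include hεj

theorem exists_sub_totalHom_mergedHom_mem
    (hyp : ∀ m : ∀ i, M i, ∃ n : ∀ i, N i,
      ∀ i, m i - totalHom A n i ∈ I i • (⊤ : Submodule (R i) (M i)))
    (m : ∀ l : Fin (u + 1), M l.succ) :
    ∃ n' : ∀ k, merged N X k, ∀ l, m l -
      totalHom (mergedHom A ε) n' l ∈ I l.succ • (⊤ : Submodule (R l.succ) (M l.succ)) := by
  obtain ⟨n, hn⟩ := hyp (Fin.cons 0 m)
  refine ⟨merged.mk (Fin.tail n) (j (n 0)), fun l => ?_⟩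
  have : totalHom (mergedHom A ε) (merged.mk (Fin.tail n) (j (n 0))) l =
      totalHom A n l.succ := by
    rw [totalHom_mergedHom, merged.fst_mk, totalHom_apply_succ, Pi.add_apply]
    exact (add_comm _ _).trans (congrArg (· + _) (hεj l (n 0)))
  simpa [this] using hn l.succ

variable [∀ i, Module (R i) (N i)] [Module (R (Fin.succ 0)) X]
variable (hA : ∀ i j (h : i ≤ j), IsHomOver (Φ i j h) (A i j h))
  (hε : ∀ l, IsHomOver (Fin.succRestrict Φ 0 l (Fin.zero_le l)) (ε l))
  (hψ : ∀ l k (h : l ≤ k), Fin.succRestrict Φ 0 k (Fin.zero_le k) =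
    (Fin.succRestrict Φ l k h).comp (Fin.succRestrict Φ 0 l (Fin.zero_le l)))
  (hlift : ∀ m : ∀ l : Fin (u + 1), M l.succ,
    (∀ l, m l ∈ I l.succ • (⊤ : Submodule (R l.succ) (M l.succ))) →
    ∃ n' : ∀ k, merged N X k,
      (∀ k, n' k ∈ I k.succ • (⊤ : Submodule (R k.succ) (merged N X k))) ∧
      totalHom (mergedHom A ε) n' = m)
include hA hε hlift

theorem exists_sub_sub_mem_smul_top
    (hyp : ∀ m : ∀ i, M i, ∃ n : ∀ i, N i,
      ∀ i, m i - totalHom A n i ∈ I i • (⊤ : Submodule (R i) (M i)))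
    (x : X) : ∃ a, ∃ w ∈ realizable (isHomOver_succRestrict hA) hψ hε (fun _ => ⊤),
      x - j a - w ∈ I (Fin.succ 0) • (⊤ : Submodule (R (Fin.succ 0)) X) := by
  obtain ⟨n, hn⟩ := hyp (Fin.cons 0 fun l => ε l x)
  obtain ⟨n', hn'I, hn'⟩ := hlift (fun l => ε l x - totalHom A n l.succ)
    fun l => by simpa using hn l.succ
  have hy := merged.snd_mem_smul_top hn'I
  refine ⟨n 0, x - j (n 0) - (n' 0).2, ⟨merged.fst n' + Fin.tail n, fun _ => trivial, ?_⟩,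
    by simpa using hy⟩
  ext l
  have h := congr_fun hn' l
  rw [totalHom_mergedHom, Pi.add_apply, totalHom_apply_succ] at h
  rw [totalHom_add (A := Fin.succRestrict A) fun _ _ _ => (hA _ _ _).1, Pi.add_apply,
    (hε l).map_sub, (hε l).map_sub, hεj, eq_sub_of_add_eq h]
  abel

theorem exists_preimage_succ_of_forall_sub_mem
    (hadeq : ∀ y ∈ I (Fin.succ 0) • (⊤ : Submodule (R (Fin.succ 0)) X),
      ∃ a ∈ I 0 • (⊤ : Submodule (R 0) (N 0)), y - j a ∈ realizable (isHomOver_succRestrict hA) hψ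
        hε (fun i => I i.succ • (⊤ : Submodule (R i.succ) (N i.succ))))
    (m : ∀ l : Fin (u + 1), M l.succ)
    (hm : ∀ l, m l ∈ I l.succ • (⊤ : Submodule (R l.succ) (M l.succ))) :
    ∃ n : ∀ i, N i, (∀ i, n i ∈ I i • (⊤ : Submodule (R i) (N i))) ∧
      ∀ l, totalHom A n l.succ = m l := by
  obtain ⟨n', hn'I, hn'⟩ := hlift m hm
  obtain ⟨a, haI, v, hvI, hv⟩ := hadeq _ (merged.snd_mem_smul_top hn'I)
  refine ⟨Fin.cons a (merged.fst n' + v), fun i => ?_, fun l => ?_⟩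
  · induction i using Fin.cases with
    | zero => exact haI
    | succ i => exact add_mem (merged.fst_mem_smul_top hn'I i) (hvI i)
  · rw [totalHom_apply_succ, Fin.cons_zero, Fin.tail_cons,
      totalHom_add (A := Fin.succRestrict A) fun _ _ _ => (hA _ _ _).1, Pi.add_apply, hv, ← hn',
      totalHom_mergedHom, Pi.add_apply]
    simp only [(hε l).map_sub, hεj]
    abel

end MergeLevels

open TensorProduct in
theorem exists_preimage_succ_of_matherProperty {u : ℕ} (IH : MatherProperty (u + 1))
    {R : Fin (u + 2) → Type} [∀ i, CommRing (R i)] {I : ∀ i, Ideal (R i)}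
    (hJac : ∀ i, IsJacobsonIdeal (I i)) {Φ : ∀ i j : Fin (u + 2), i ≤ j → (R i →+* R j)}
    (hrefl : ∀ i (h : i ≤ i), Φ i i h = RingHom.id (R i))
    (hcomp : ∀ i j k (hij : i ≤ j) (hjk : j ≤ k) (hik : i ≤ k),
      Φ i k hik = (Φ j k hjk).comp (Φ i j hij))
    (hΦI : ∀ i j (h : i ≤ j), ∀ r ∈ I i, Φ i j h r ∈ I j)
    (hAde : ∀ (i j : Fin (u + 2)) (h : i ≤ j), (j : ℕ) = i + 1 → Adequate (Φ i j h) (I i) (I j))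
    {N M : Fin (u + 2) → Type} [∀ i, AddCommGroup (N i)] [∀ i, Module (R i) (N i)]
    [∀ i, AddCommGroup (M i)] [∀ i, Module (R i) (M i)] (hMfin : ∀ i, Module.Finite (R i) (M i))
    (hNfin : ∀ i : Fin (u + 2), (i : ℕ) + 1 < u + 2 → Module.Finite (R i) (N i))
    {A : ∀ i j : Fin (u + 2), i ≤ j → N i → M j}
    (hA : ∀ i j (h : i ≤ j), IsHomOver (Φ i j h) (A i j h))
    (hyp : ∀ m : ∀ i, M i, ∃ n : ∀ i, N i,
      ∀ i, m i - totalHom A n i ∈ I i • (⊤ : Submodule (R i) (M i)))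
    (m : ∀ l : Fin (u + 1), M l.succ)
    (hm : ∀ l, m l ∈ I l.succ • (⊤ : Submodule (R l.succ) (M l.succ))) :
    ∃ n : ∀ i, N i, (∀ i, n i ∈ I i • (⊤ : Submodule (R i) (N i))) ∧
      ∀ l, totalHom A n l.succ = m l := by
  let := (Φ 0 (Fin.succ 0) (Fin.zero_le _)).toAlgebra
  have := hNfin 0 (by simp)
  have hA₀ : ∀ l : Fin (u + 1), IsHomOver ((Fin.succRestrict Φ 0 l (Fin.zero_le l)).comp
      (algebraMap (R 0) (R (Fin.succ 0)))) (A 0 l.succ (Fin.zero_le _)) := fun l => by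
    rw [RingHom.algebraMap_toAlgebra, Fin.succRestrict, ← hcomp]
    exact hA _ _ _
  choose ε hε hεj using fun l => (hA₀ l).exists_lift_tensorProduct
  have hψ : ∀ l k (h : l ≤ k), Fin.succRestrict Φ 0 k (Fin.zero_le k) =
      (Fin.succRestrict Φ l k h).comp (Fin.succRestrict Φ 0 l (Fin.zero_le l)) :=
    fun _ _ _ => hcomp _ _ _ _ _ _
  have hlift := IH (fun l => R l.succ) inferInstance (fun l => I l.succ) (fun _ => hJac _)
    (Fin.succRestrict Φ) (fun _ _ => hrefl _ _) (fun _ _ _ _ _ _ => hcomp _ _ _ _ _ _)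
    (fun _ _ _ => hΦI _ _ _) (fun _ _ _ hij => hAde _ _ _ (by simp [hij]))
    (merged N (R (Fin.succ 0) ⊗[R 0] N 0)) (fun l => M l.succ) inferInstance inferInstance
    inferInstance inferInstance (fun _ => hMfin _) (merged.finite hNfin) (mergedHom A ε)
    (isHomOver_mergedHom A ε hA hε) (exists_sub_totalHom_mergedHom_mem hεj hyp)
  exact exists_preimage_succ_of_forall_sub_mem hεj hA hε hψ hlift
    (fun y hy => (hAde 0 (Fin.succ 0) (Fin.zero_le _) (by simp)).exists_sub_mem
      isHomOver_one_tmul (smul_realizable_le _ hψ hε fun _ c hc => hΦI _ _ _ c hc)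
      (exists_sub_sub_mem_smul_top hεj hA hε hψ hlift hyp) hy) m hm

theorem matherProperty : ∀ s, MatherProperty s
  | 0 => fun _ _ _ _ _ _ _ _ _ _ _ _ _ _ _ _ _ _ _ _ _ _ =>
    ⟨0, fun i => i.elim0, funext fun i => i.elim0⟩
  | 1 => fun _ _ _ hJac _ hrefl hcomp hΦI _ _ _ _ _ _ _ hMfin _ _ hA hyp =>
    have := hMfin 0
    exists_preimage_of_exists_preimage_succ hA hΦI hyp
      (fun _ _ => ⟨0, fun _ => zero_mem _, fun l => l.elim0⟩) (hJac 0) (hrefl 0 le_rfl) hcomp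
  | u + 2 => fun _ _ _ hJac _ hrefl hcomp hΦI hAde _ _ _ _ _ _ hMfin hNfin _ hA hyp =>
    have := hMfin 0
    exists_preimage_of_exists_preimage_succ hA hΦI hyp
      (exists_preimage_succ_of_matherProperty (matherProperty (u + 1)) hJac hrefl hcomp hΦI hAde
        hMfin hNfin hA hyp) (hJac 0) (hrefl 0 le_rfl) hcomp

theorem mather_algebraic_theorem_general
    (s : ℕ)
    (R : Fin s → Type) [∀ i, CommRing (R i)]
    (I : ∀ i, Ideal (R i))
    (hJac : ∀ i, IsJacobsonIdeal (I i))
    -- the composites `φ_{ij} : R i →+* R j`, `i ≤ j`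
    (Φ : ∀ i j : Fin s, i ≤ j → (R i →+* R j))
    (hΦrefl : ∀ (i : Fin s) (h : i ≤ i), Φ i i h = RingHom.id (R i))
    (hΦsucc : ∀ (i j : Fin s) (hij : i ≤ j) (hj : (j : ℕ) + 1 < s),
      Φ i ⟨(j : ℕ) + 1, hj⟩ (le_trans hij (Fin.le_def.mpr (Nat.le_succ _))) =
        (Φ j ⟨(j : ℕ) + 1, hj⟩ (Fin.le_def.mpr (Nat.le_succ _))).comp (Φ i j hij))
    -- each consecutive `φ_j` sends `I_j` into `I_{j+1}` and is adequate
    (hΦI : ∀ (j : Fin s) (hj : (j : ℕ) + 1 < s),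
      ∀ r ∈ I j, Φ j ⟨(j : ℕ) + 1, hj⟩ (Fin.le_def.mpr (Nat.le_succ _)) r ∈ I ⟨(j : ℕ) + 1, hj⟩)
    (hAde : ∀ (j : Fin s) (hj : (j : ℕ) + 1 < s),
      Adequate (Φ j ⟨(j : ℕ) + 1, hj⟩ (Fin.le_def.mpr (Nat.le_succ _))) (I j) (I ⟨(j : ℕ) + 1, hj⟩))
    -- the modules
    (N M : Fin s → Type)
    [∀ i, AddCommGroup (N i)] [∀ i, Module (R i) (N i)]
    [∀ i, AddCommGroup (M i)] [∀ i, Module (R i) (M i)]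
    (hMfin : ∀ i, Module.Finite (R i) (M i))
    (hNfin : ∀ i : Fin s, (i : ℕ) + 1 < s → Module.Finite (R i) (N i))
    -- the homomorphisms `α_{ij}` over `φ_{ij}`
    (A : ∀ i j : Fin s, i ≤ j → N i → M j)
    (hA : ∀ (i j : Fin s) (hij : i ≤ j), IsHomOver (Φ i j hij) (A i j hij))
    -- hypothesis (I): `α(N) + Σᵢ Iᵢ·Mᵢ = M`
    (hyp : ∀ m : ∀ i, M i, ∃ n : ∀ i, N i,
      ∀ i, m i - totalHom A n i ∈ (I i) • (⊤ : Submodule (R i) (M i))) :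
    -- (II): `α` is onto
    (∀ m : ∀ i, M i, ∃ n : ∀ i, N i, totalHom A n = m) ∧
    -- (III): `α (Σᵢ Iᵢ·Nᵢ) = Σᵢ Iᵢ·Mᵢ`
    (∀ m : ∀ i, M i, (∀ i, m i ∈ (I i) • (⊤ : Submodule (R i) (M i))) ↔
      ∃ n : ∀ i, N i, (∀ i, n i ∈ (I i) • (⊤ : Submodule (R i) (N i))) ∧
        totalHom A n = m) := by
  have hcomp := chain_comp hΦrefl hΦsucc
  have hΦI' := chain_mem hΦrefl hΦsucc hΦI
  have hAde' : ∀ (i j : Fin s) (h : i ≤ j), (j : ℕ) = i + 1 → Adequate (Φ i j h) (I i) (I j) := by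
    rintro i ⟨j, hj⟩ h rfl
    exact hAde i hj
  have hlift := matherProperty s R inferInstance I hJac Φ hΦrefl hcomp hΦI' hAde' N M
    inferInstance inferInstance inferInstance inferInstance hMfin hNfin A hA hyp
  refine ⟨fun m => ?_, fun m => ⟨hlift m, ?_⟩⟩
  · obtain ⟨n, hn⟩ := hyp m
    obtain ⟨n', -, hn'⟩ := hlift (m - totalHom A n) hn
    exact ⟨n + n', by rw [totalHom_add fun i j h => (hA i j h).1, hn', add_sub_cancel]⟩
  · rintro ⟨n, hn, rfl⟩
    exact totalHom_mem_smul_top hA hΦI' hn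

/-- Mather's algebraic theorem: given a chain of adequate homomorphisms
`(R₁,I₁) → ⋯ → (R_s,I_s)` of rings with Jacobson ideals, finitely generated modules
`Nᵢ, Mᵢ` over `Rᵢ` (with the possible exception of `N_s`), and homomorphisms
`α_{ij} : Nᵢ → M_j` over the composites `φ_{ij}`, if the total map `α` satisfies
`α(N) + Σᵢ Iᵢ·Mᵢ = M`, then `α(N) = M` and `α(Σᵢ Iᵢ·Nᵢ) = Σᵢ Iᵢ·Mᵢ`. -/
theorem mather_algebraic_theorem
    (s : ℕ) (hs : 1 ≤ s)
    (R : Fin s → Type) [∀ i, CommRing (R i)]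
    (I : ∀ i, Ideal (R i))
    (hJac : ∀ i, IsJacobsonIdeal (I i))
    -- the composites `φ_{ij} : R i →+* R j`, `i ≤ j`
    (Φ : ∀ i j : Fin s, i ≤ j → (R i →+* R j))
    (hΦrefl : ∀ (i : Fin s) (h : i ≤ i), Φ i i h = RingHom.id (R i))
    (hΦsucc : ∀ (i j : Fin s) (hij : i ≤ j) (hj : (j : ℕ) + 1 < s),
      Φ i ⟨(j : ℕ) + 1, hj⟩ (le_trans hij (Fin.le_def.mpr (Nat.le_succ _))) =
        (Φ j ⟨(j : ℕ) + 1, hj⟩ (Fin.le_def.mpr (Nat.le_succ _))).comp (Φ i j hij))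
    -- each consecutive `φ_j` sends `I_j` into `I_{j+1}` and is adequate
    (hΦI : ∀ (j : Fin s) (hj : (j : ℕ) + 1 < s),
      ∀ r ∈ I j, Φ j ⟨(j : ℕ) + 1, hj⟩ (Fin.le_def.mpr (Nat.le_succ _)) r ∈ I ⟨(j : ℕ) + 1, hj⟩)
    (hAde : ∀ (j : Fin s) (hj : (j : ℕ) + 1 < s),
      Adequate (Φ j ⟨(j : ℕ) + 1, hj⟩ (Fin.le_def.mpr (Nat.le_succ _))) (I j) (I ⟨(j : ℕ) + 1, hj⟩))
    -- the modules
    (N M : Fin s → Type)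
    [∀ i, AddCommGroup (N i)] [∀ i, Module (R i) (N i)]
    [∀ i, AddCommGroup (M i)] [∀ i, Module (R i) (M i)]
    (hMfin : ∀ i, Module.Finite (R i) (M i))
    (hNfin : ∀ i : Fin s, (i : ℕ) + 1 < s → Module.Finite (R i) (N i))
    -- the homomorphisms `α_{ij}` over `φ_{ij}`
    (A : ∀ i j : Fin s, i ≤ j → N i → M j)
    (hA : ∀ (i j : Fin s) (hij : i ≤ j), IsHomOver (Φ i j hij) (A i j hij))
    -- hypothesis (I): `α(N) + Σᵢ Iᵢ·Mᵢ = M`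
    (hyp : ∀ m : ∀ i, M i, ∃ n : ∀ i, N i,
      ∀ i, m i - totalHom A n i ∈ (I i) • (⊤ : Submodule (R i) (M i))) :
    -- (II): `α` is onto
    (∀ m : ∀ i, M i, ∃ n : ∀ i, N i, totalHom A n = m) ∧
    -- (III): `α (Σᵢ Iᵢ·Nᵢ) = Σᵢ Iᵢ·Mᵢ`
    (∀ m : ∀ i, M i, (∀ i, m i ∈ (I i) • (⊤ : Submodule (R i) (M i))) ↔
      ∃ n : ∀ i, N i, (∀ i, n i ∈ (I i) • (⊤ : Submodule (R i) (N i))) ∧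
        totalHom A n = m) :=
  mather_algebraic_theorem_general s R I hJac Φ hΦrefl hΦsucc hΦI hAde N M hMfin hNfin A hA hyp
end

section
/- Let X be a nonempty compact metric space and f : X → X continuous. Let A and R be disjoint closed subsets of X. Assume: (a) there is an open set U containing A such that f(cl(U)) ⊆ U and ⋂_{n≥0} f^n(cl(U)) = A; (b) there is an open set V containing R such that ⋂_{n≥0} f^{-n}(V) = R; (c) for every x ∈ X, the ω-limit set ω(x) of x under iteration of f is contained in A ∪ R. Then X is the disjoint union of the open set B := ⋃_{n≥0} f^{-n}(U) and the set R̂ := ⋃_{n≥0} f^{-n}(R); in particular R̂ is closed. Moreover B = {x ∈ X : ω(x) ⊆ A} and R̂ = {x ∈ X : ω(x) ⊆ R}. -/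
open Set

/-- The ω-limit set of a point `x` under iteration of `f`:
`ω(x) = ⋂ₙ cl {f^[m] x : m ≥ n}`. -/
def omegaSet {X : Type*} [TopologicalSpace X] (f : X → X) (x : X) : Set X :=
  ⋂ n : ℕ, closure {y | ∃ m : ℕ, n ≤ m ∧ f^[m] x = y}

section Aux

variable {X : Type*} [MetricSpace X] [CompactSpace X] {f : X → X} {x : X}

lemma omegaSet_nonempty (f : X → X) (x : X) : (omegaSet f x).Nonempty := by
  apply IsCompact.nonempty_iInter_of_sequence_nonempty_isCompact_isClosed
    (fun n => closure {y | ∃ m : ℕ, n ≤ m ∧ f^[m] x = y})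
  · intro i
    exact closure_mono fun y ⟨m, hm, he⟩ => ⟨m, by omega, he⟩
  · intro i
    exact ⟨f^[i] x, subset_closure ⟨i, le_refl i, rfl⟩⟩
  · exact isClosed_closure.isCompact
  · intro i
    exact isClosed_closure

lemma omegaSet_subset_closed {C : Set X} (hC : IsClosed C) {N : ℕ}
    (htail : ∀ m, N ≤ m → f^[m] x ∈ C) : omegaSet f x ⊆ C := by
  intro p hp
  have hp' : p ∈ closure {y | ∃ m : ℕ, N ≤ m ∧ f^[m] x = y} := mem_iInter.1 hp N
  refine hC.closure_subset (closure_mono ?_ hp')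
  rintro y ⟨m, hm, rfl⟩
  exact htail m hm

/-- If the tail of the orbit stays in a closed set `C`, the ω-limit set is contained in every
image `f^[k] '' C`. -/
lemma omegaSet_subset_iterate_image (hf : Continuous f) {C : Set X} (hC : IsClosed C) {N : ℕ}
    (htail : ∀ m, N ≤ m → f^[m] x ∈ C) (k : ℕ) : omegaSet f x ⊆ f^[k] '' C := by
  intro p hp
  have hp' : p ∈ closure {y | ∃ m : ℕ, N + k ≤ m ∧ f^[m] x = y} := mem_iInter.1 hp (N + k)
  rw [mem_closure_iff_seq_limit] at hp'
  obtain ⟨u, hu, hlim⟩ := hp'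
  choose m hm1 hm2 using hu
  have hvC : ∀ i, f^[m i - k] x ∈ C := fun i => htail _ (by have := hm1 i; omega)
  obtain ⟨q, hqC, φ, hφ, hconv⟩ := hC.isCompact.tendsto_subseq hvC
  refine ⟨q, hqC, ?_⟩
  have h1 : Filter.Tendsto (fun i => f^[k] (f^[m (φ i) - k] x)) Filter.atTop (nhds (f^[k] q)) :=
    ((hf.iterate k).tendsto q).comp hconv
  have h2 : ∀ i, f^[k] (f^[m (φ i) - k] x) = u (φ i) := by
    intro i
    rw [← hm2 (φ i), ← Function.iterate_add_apply]
    congr 1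
    have := hm1 (φ i); omega
  have h3 : Filter.Tendsto (fun i => u (φ i)) Filter.atTop (nhds p) :=
    hlim.comp hφ.tendsto_atTop
  exact tendsto_nhds_unique ((Filter.tendsto_congr h2).1 h1) h3

/-- If the ω-limit set is contained in an open set `W`, then the orbit eventually stays in `W`. -/
lemma eventually_mem_of_omegaSet_subset {W : Set X} (hW : IsOpen W)
    (hsub : omegaSet f x ⊆ W) : ∃ N, ∀ m, N ≤ m → f^[m] x ∈ W := by
  by_contra h
  push_neg at h
  choose g hg1 hg2 using h
  have hmem : ∀ N, f^[g N] x ∈ Wᶜ := hg2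
  obtain ⟨q, hqW, φ, hφ, hconv⟩ := hW.isClosed_compl.isCompact.tendsto_subseq hmem
  have hq : q ∈ omegaSet f x := by
    refine mem_iInter.2 fun n => ?_
    refine mem_closure_of_tendsto hconv ?_
    filter_upwards [Filter.eventually_ge_atTop n] with i hi
    exact ⟨g (φ i), le_trans (le_trans hi (hφ.le_apply)) (hg1 _), rfl⟩
  exact hqW (hsub hq)

end Aux

/-- Decomposition of a compact metric space into the basin of an attractor `A` and the
closed set of points eventually mapped into a repellor `R`. -/
theorem attractor_repellor_decomposition
    {X : Type*} [MetricSpace X] [CompactSpace X] [Nonempty X]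
    (f : X → X) (hf : Continuous f)
    (A R : Set X) (hA : IsClosed A) (hR : IsClosed R) (hAR : Disjoint A R)
    (U : Set X) (hU : IsOpen U) (hAU : A ⊆ U)
    (hfU : f '' closure U ⊆ U)
    (hUA : (⋂ n : ℕ, f^[n] '' closure U) = A)
    (V : Set X) (hV : IsOpen V) (hRV : R ⊆ V)
    (hVR : (⋂ n : ℕ, f^[n] ⁻¹' V) = R)
    (homega : ∀ x : X, omegaSet f x ⊆ A ∪ R) :
    IsOpen (⋃ n : ℕ, f^[n] ⁻¹' U) ∧
    IsClosed (⋃ n : ℕ, f^[n] ⁻¹' R) ∧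
    (⋃ n : ℕ, f^[n] ⁻¹' U) ∪ (⋃ n : ℕ, f^[n] ⁻¹' R) = univ ∧
    Disjoint (⋃ n : ℕ, f^[n] ⁻¹' U) (⋃ n : ℕ, f^[n] ⁻¹' R) ∧
    (⋃ n : ℕ, f^[n] ⁻¹' U) = {x : X | omegaSet f x ⊆ A} ∧
    (⋃ n : ℕ, f^[n] ⁻¹' R) = {x : X | omegaSet f x ⊆ R} := by
  -- once in U, stay in U forever
  have hstayU : ∀ (x : X) (n : ℕ), f^[n] x ∈ U → ∀ m, n ≤ m → f^[m] x ∈ U := by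
    intro x n hn m hm
    obtain ⟨k, rfl⟩ := Nat.exists_eq_add_of_le hm
    induction k with
    | zero => exact hn
    | succ k ih =>
      have heq : f^[n + (k + 1)] x = f (f^[n + k] x) := by
        rw [show n + (k + 1) = (n + k) + 1 by omega]
        exact Function.iterate_succ_apply' f _ x
      rw [heq]
      exact hfU ⟨f^[n + k] x, subset_closure (ih (by omega)), rfl⟩
  -- R is forward invariant
  have hstayR : ∀ (x : X) (n : ℕ), f^[n] x ∈ R → ∀ m, n ≤ m → f^[m] x ∈ R := by
    intro x n hn m hm
    obtain ⟨k, rfl⟩ := Nat.exists_eq_add_of_le hm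
    rw [← hVR, mem_iInter] at hn ⊢
    intro j
    have h := hn (j + k)
    rw [mem_preimage, ← Function.iterate_add_apply] at h
    rw [mem_preimage, ← Function.iterate_add_apply, show j + (n + k) = j + k + n by omega]
    exact h
  -- orbit enters U ⇒ ω(x) ⊆ A
  have claim1 : ∀ x : X, (∃ n, f^[n] x ∈ U) → omegaSet f x ⊆ A := by
    rintro x ⟨n, hn⟩
    have htail : ∀ m, n ≤ m → f^[m] x ∈ closure U :=
      fun m hm => subset_closure (hstayU x n hn m hm)
    rw [← hUA]
    exact subset_iInter fun k =>
      omegaSet_subset_iterate_image hf isClosed_closure htail k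
  -- orbit enters R ⇒ ω(x) ⊆ R
  have claim2 : ∀ x : X, (∃ n, f^[n] x ∈ R) → omegaSet f x ⊆ R := by
    rintro x ⟨n, hn⟩
    exact omegaSet_subset_closed hR (hstayR x n hn)
  -- ω(x) ⊆ A ⇒ orbit enters U
  have claim3 : ∀ x : X, omegaSet f x ⊆ A → ∃ n, f^[n] x ∈ U := by
    intro x hx
    obtain ⟨N, hN⟩ := eventually_mem_of_omegaSet_subset hU (hx.trans hAU)
    exact ⟨N, hN N le_rfl⟩
  -- ω(x) ⊆ R ⇒ orbit enters R
  have claim4 : ∀ x : X, omegaSet f x ⊆ R → ∃ n, f^[n] x ∈ R := by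
    intro x hx
    obtain ⟨N, hN⟩ := eventually_mem_of_omegaSet_subset hV (hx.trans hRV)
    refine ⟨N, ?_⟩
    rw [← hVR, mem_iInter]
    intro j
    rw [mem_preimage, ← Function.iterate_add_apply]
    exact hN (j + N) (by omega)
  -- dichotomy
  have claim5 : ∀ x : X, omegaSet f x ⊆ A ∨ omegaSet f x ⊆ R := by
    intro x
    by_cases hmeet : (omegaSet f x ∩ A).Nonempty
    · obtain ⟨p, hp, hpA⟩ := hmeet
      left
      refine claim1 x ?_
      have hp0 : p ∈ closure {y | ∃ m : ℕ, 0 ≤ m ∧ f^[m] x = y} := mem_iInter.1 hp 0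
      rw [mem_closure_iff] at hp0
      obtain ⟨y, hyU, ⟨m, -, rfl⟩⟩ := hp0 U hU (hAU hpA)
      exact ⟨m, hyU⟩
    · right
      intro p hp
      rcases homega x hp with h | h
      · exact absurd ⟨p, hp, h⟩ hmeet
      · exact h
  have hBopen : IsOpen (⋃ n : ℕ, f^[n] ⁻¹' U) :=
    isOpen_iUnion fun n => hU.preimage (hf.iterate n)
  have hBeq : (⋃ n : ℕ, f^[n] ⁻¹' U) = {x : X | omegaSet f x ⊆ A} := by
    ext x
    simp only [mem_iUnion, mem_preimage, mem_setOf_eq]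
    exact ⟨claim1 x, claim3 x⟩
  have hReq : (⋃ n : ℕ, f^[n] ⁻¹' R) = {x : X | omegaSet f x ⊆ R} := by
    ext x
    simp only [mem_iUnion, mem_preimage, mem_setOf_eq]
    exact ⟨claim2 x, claim4 x⟩
  have hunion : (⋃ n : ℕ, f^[n] ⁻¹' U) ∪ (⋃ n : ℕ, f^[n] ⁻¹' R) = univ := by
    rw [hBeq, hReq, eq_univ_iff_forall]
    intro x
    rcases claim5 x with h | h
    · exact Or.inl h
    · exact Or.inr h
  have hdisj : Disjoint (⋃ n : ℕ, f^[n] ⁻¹' U) (⋃ n : ℕ, f^[n] ⁻¹' R) := by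
    rw [hBeq, hReq, disjoint_left]
    intro x hxA hxR
    obtain ⟨p, hp⟩ := omegaSet_nonempty f x
    exact hAR.ne_of_mem (hxA hp) (hxR hp) rfl
  have hRclosed : IsClosed (⋃ n : ℕ, f^[n] ⁻¹' R) := by
    have : (⋃ n : ℕ, f^[n] ⁻¹' R) = (⋃ n : ℕ, f^[n] ⁻¹' U)ᶜ := by
      apply Subset.antisymm
      · exact subset_compl_iff_disjoint_left.2 hdisj
      · intro x hx
        rcases (eq_univ_iff_forall.1 hunion) x with h | h
        · exact absurd h hx
        · exact h
    rw [this]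
    exact hBopen.isClosed_compl
  exact ⟨hBopen, hRclosed, hunion, hdisj, hBeq, hReq⟩
end
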